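/- Under Assumptions 1 and 2, if x : ℝ → ℝⁿ is a differentiable trajectory satisfying ẋ(t) = F(x(t),t) with F(x,t) := −[∇ₓₓ f(x;t)]⁻¹ ∇_{tx} f(x;t), then the total time derivative of F along the trajectory is bounded: ‖(d/dt) F(x(t),t)‖ ≤ C₀²C₁/m³ + 2C₀C₂/m² + C₃/m for all t. -/

import Mathlib

/-!
Write `H(s) = ∇ₓₓ f(x(s);s)` and `b(s) = ∇_{tx} f(x(s);s)`, so that `F = -H⁻¹ b` along the
trajectory. Strong convexity gives `‖H⁻¹‖ ≤ 1/m`, hence the trajectory moves with speed at most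
`C₀/m`. Consequently `H` is `(C₂ + C₁C₀/m)`-Lipschitz in `s`, and `b` is `(C₃ + C₂C₀/m)`-Lipschitz
in `s`: the `x`-Lipschitz constant `C₂` of `∇_{tx} f` comes from `∇_{xtx} f` by exchanging the
order of differentiation in mean-value form. The resolvent identity
`H(s)⁻¹ - H(t)⁻¹ = H(s)⁻¹ (H(t) - H(s)) H(t)⁻¹` then shows that `F` is Lipschitz in `s` with
constant `C₀²C₁/m³ + 2C₀C₂/m² + C₃/m`, and a Lipschitz function has derivative bounded by its
Lipschitz constant.
-/

/-- The setting of a time-varying, smooth, strongly convex optimization problem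
`min_{x ∈ ℝⁿ} f(x;t)`, bundling the objective `f`, its derivatives, the Hessian
inverse, the optimal trajectory `x*(t)`, and Assumptions 1 and 2 of the paper. -/
structure TVOpt (n : ℕ) where
  /-- the objective `f(x;t)` -/
  f : EuclideanSpace ℝ (Fin n) → ℝ → ℝ
  /-- the gradient `∇ₓ f(x;t)` -/
  grad : EuclideanSpace ℝ (Fin n) → ℝ → EuclideanSpace ℝ (Fin n)
  /-- the Hessian `∇ₓₓ f(x;t)` -/
  hess : EuclideanSpace ℝ (Fin n) → ℝ →
    EuclideanSpace ℝ (Fin n) →L[ℝ] EuclideanSpace ℝ (Fin n)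
  /-- the Hessian inverse `[∇ₓₓ f(x;t)]⁻¹` -/
  hessInv : EuclideanSpace ℝ (Fin n) → ℝ →
    EuclideanSpace ℝ (Fin n) →L[ℝ] EuclideanSpace ℝ (Fin n)
  /-- the mixed partial derivative `∇_{tx} f(x;t)` -/
  dtgrad : EuclideanSpace ℝ (Fin n) → ℝ → EuclideanSpace ℝ (Fin n)
  /-- the third derivative tensor `∇ₓₓₓ f(x;t)` -/
  d3 : EuclideanSpace ℝ (Fin n) → ℝ →
    EuclideanSpace ℝ (Fin n) →L[ℝ] EuclideanSpace ℝ (Fin n) →L[ℝ] EuclideanSpace ℝ (Fin n)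
  /-- the time derivative of the Hessian `∇_{xtx} f(x;t)` -/
  dthess : EuclideanSpace ℝ (Fin n) → ℝ →
    EuclideanSpace ℝ (Fin n) →L[ℝ] EuclideanSpace ℝ (Fin n)
  /-- the second time derivative of the gradient `∇_{ttx} f(x;t)` -/
  dttgrad : EuclideanSpace ℝ (Fin n) → ℝ → EuclideanSpace ℝ (Fin n)
  /-- the optimal trajectory `x*(t)` -/
  xstar : ℝ → EuclideanSpace ℝ (Fin n)
  /-- strong convexity constant -/
  m : ℝ
  /-- Hessian norm bound (gradient Lipschitz constant) -/
  L : ℝ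
  C0 : ℝ
  C1 : ℝ
  C2 : ℝ
  C3 : ℝ
  m_pos : 0 < m
  grad_spec : ∀ (x : EuclideanSpace ℝ (Fin n)) (t : ℝ), HasGradientAt (fun y => f y t) (grad x t) x
  hess_spec : ∀ (x : EuclideanSpace ℝ (Fin n)) (t : ℝ), HasFDerivAt (fun y => grad y t) (hess x t) x
  dtgrad_spec : ∀ (x : EuclideanSpace ℝ (Fin n)) (t : ℝ), HasDerivAt (fun s => grad x s) (dtgrad x t) t
  d3_spec : ∀ (x : EuclideanSpace ℝ (Fin n)) (t : ℝ), HasFDerivAt (fun y => hess y t) (d3 x t) x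
  dthess_spec : ∀ (x : EuclideanSpace ℝ (Fin n)) (t : ℝ), HasDerivAt (fun s => hess x s) (dthess x t) t
  dttgrad_spec : ∀ (x : EuclideanSpace ℝ (Fin n)) (t : ℝ), HasDerivAt (fun s => dtgrad x s) (dttgrad x t) t
  /-- Assumption 1: `∇ₓₓ f(x;t) ⪰ m·I` uniformly in `x` and `t`. -/
  strong_convex : ∀ (x : EuclideanSpace ℝ (Fin n)) (t : ℝ) (v : EuclideanSpace ℝ (Fin n)),
    m * ‖v‖ ^ 2 ≤ @inner ℝ _ _ v (hess x t v)
  hessInv_left : ∀ (x : EuclideanSpace ℝ (Fin n)) (t : ℝ), ContinuousLinearMap.comp (hessInv x t) (hess x t) =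
    ContinuousLinearMap.id ℝ (EuclideanSpace ℝ (Fin n))
  hessInv_right : ∀ (x : EuclideanSpace ℝ (Fin n)) (t : ℝ), ContinuousLinearMap.comp (hess x t) (hessInv x t) =
    ContinuousLinearMap.id ℝ (EuclideanSpace ℝ (Fin n))
  /-- Assumption 2: bounded derivatives, uniformly in `x` and `t`. -/
  hess_bound : ∀ (x : EuclideanSpace ℝ (Fin n)) (t : ℝ), ‖hess x t‖ ≤ L
  dtgrad_bound : ∀ (x : EuclideanSpace ℝ (Fin n)) (t : ℝ), ‖dtgrad x t‖ ≤ C0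
  d3_bound : ∀ (x : EuclideanSpace ℝ (Fin n)) (t : ℝ), ‖d3 x t‖ ≤ C1
  dthess_bound : ∀ (x : EuclideanSpace ℝ (Fin n)) (t : ℝ), ‖dthess x t‖ ≤ C2
  dttgrad_bound : ∀ (x : EuclideanSpace ℝ (Fin n)) (t : ℝ), ‖dttgrad x t‖ ≤ C3
  /-- `x*(t)` minimizes `f(·;t)` -/
  xstar_min : ∀ t : ℝ, IsMinOn (fun x => f x t) Set.univ (xstar t)
  /-- equivalently, `∇ₓ f(x*(t);t) = 0` -/
  xstar_grad : ∀ t : ℝ, grad (xstar t) t = 0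


open Filter

section MeanValue

variable {E F : Type*} [NormedAddCommGroup E] [NormedSpace ℝ E]
  [NormedAddCommGroup F] [NormedSpace ℝ F]

lemma norm_sub_le_of_hasDerivAt_of_norm_le {φ φ' : ℝ → F} {C : ℝ}
    (hφ : ∀ s, HasDerivAt φ (φ' s) s) (hC : ∀ s, ‖φ' s‖ ≤ C) (a b : ℝ) :
    ‖φ b - φ a‖ ≤ C * ‖b - a‖ :=
  convex_univ.norm_image_sub_le_of_norm_hasDerivWithin_le
    (fun s _ => (hφ s).hasDerivWithinAt) (fun s _ => hC s) trivial trivial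

lemma norm_sub_le_of_hasFDerivAt_of_norm_le {φ : E → F} {φ' : E → E →L[ℝ] F} {C : ℝ}
    (hφ : ∀ z, HasFDerivAt φ (φ' z) z) (hC : ∀ z, ‖φ' z‖ ≤ C) (y z : E) :
    ‖φ z - φ y‖ ≤ C * ‖z - y‖ :=
  convex_univ.norm_image_sub_le_of_norm_hasFDerivWithin_le
    (fun w _ => (hφ w).hasFDerivWithinAt) (fun w _ => hC w) trivial trivial

lemma norm_timeDeriv_sub_le_of_spaceDeriv_lipschitz {G : E → ℝ → F} {A : E → ℝ → E →L[ℝ] F}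
    {B : E → ℝ → F} {K : ℝ} (hA : ∀ z s, HasFDerivAt (fun w => G w s) (A z s) z)
    (hB : ∀ z s, HasDerivAt (G z) (B z s) s) (hK : 0 ≤ K)
    (hA_lip : ∀ z a b, ‖A z b - A z a‖ ≤ K * ‖b - a‖) (y z : E) (t : ℝ) :
    ‖B z t - B y t‖ ≤ K * ‖z - y‖ := by
  refine ((hB z t).sub (hB y t)).le_of_lip' (by positivity) (Eventually.of_forall fun s => ?_)
  have hincr := norm_sub_le_of_hasFDerivAt_of_norm_le
    (fun w => (hA w s).sub (hA w t)) (fun w => hA_lip w t s) y z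
  calc ‖(G z s - G y s) - (G z t - G y t)‖
      = ‖(G z s - G z t) - (G y s - G y t)‖ := by congr 1; abel
    _ ≤ K * ‖s - t‖ * ‖z - y‖ := hincr
    _ = K * ‖z - y‖ * ‖s - t‖ := by ring

end MeanValue

lemma norm_comp_sub_le_of_lipschitz {E F : Type*} [SeminormedAddCommGroup E]
    [SeminormedAddCommGroup F] {Φ : E → ℝ → F} {γ : ℝ → E} {Lx Lt V : ℝ} (hLx : 0 ≤ Lx)
    (hx : ∀ s y z, ‖Φ z s - Φ y s‖ ≤ Lx * ‖z - y‖)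
    (ht : ∀ z a b, ‖Φ z b - Φ z a‖ ≤ Lt * ‖b - a‖)
    (hγ : ∀ a b, ‖γ b - γ a‖ ≤ V * ‖b - a‖) (a b : ℝ) :
    ‖Φ (γ b) b - Φ (γ a) a‖ ≤ (Lt + Lx * V) * ‖b - a‖ :=
  calc ‖Φ (γ b) b - Φ (γ a) a‖
      ≤ ‖Φ (γ b) b - Φ (γ b) a‖ + ‖Φ (γ b) a - Φ (γ a) a‖ := norm_sub_le_norm_sub_add_norm_sub _ _ _
    _ ≤ Lt * ‖b - a‖ + Lx * (V * ‖b - a‖) :=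
        add_le_add (ht _ _ _) ((hx _ _ _).trans (mul_le_mul_of_nonneg_left (hγ a b) hLx))
    _ = (Lt + Lx * V) * ‖b - a‖ := by ring

lemma mul_norm_le_norm_apply_of_coercive {H : Type*} [NormedAddCommGroup H]
    [InnerProductSpace ℝ H] {A : H → H} {m : ℝ} (hA : ∀ v, m * ‖v‖ ^ 2 ≤ inner ℝ v (A v)) (v : H) :
    m * ‖v‖ ≤ ‖A v‖ := by
  have h : ‖v‖ * (m * ‖v‖) ≤ ‖v‖ * ‖A v‖ := by
    linarith [hA v, real_inner_le_norm v (A v)]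
  rcases (norm_nonneg v).eq_or_lt with hv | hv
  · rw [← hv, mul_zero]
    exact norm_nonneg _
  · exact le_of_mul_le_mul_left h hv

lemma ContinuousLinearMap.leftInverse_apply_sub_rightInverse_apply {E : Type*}
    [NormedAddCommGroup E] [NormedSpace ℝ E] {A A' B B' : E →L[ℝ] E}
    (hA : A'.comp A = .id ℝ E) (hB : B.comp B' = .id ℝ E) (u v : E) :
    A' u - B' v = A' (u - v + (B - A) (B' v)) := by
  have hA' : A' (A (B' v)) = B' v := DFunLike.congr_fun hA (B' v)
  have hB' : B (B' v) = v := DFunLike.congr_fun hB v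
  rw [map_add, map_sub, sub_apply, map_sub, hA', hB']
  abel

namespace TVOpt

variable {n : ℕ} (P : TVOpt n)

def predictionField (z : EuclideanSpace ℝ (Fin n)) (s : ℝ) : EuclideanSpace ℝ (Fin n) :=
  -(P.hessInv z s (P.dtgrad z s))

lemma C0_nonneg : 0 ≤ P.C0 := (norm_nonneg (P.dtgrad 0 0)).trans (P.dtgrad_bound 0 0)

lemma C1_nonneg : 0 ≤ P.C1 := (norm_nonneg (P.d3 0 0)).trans (P.d3_bound 0 0)

lemma C2_nonneg : 0 ≤ P.C2 := (norm_nonneg (P.dthess 0 0)).trans (P.dthess_bound 0 0)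

lemma C3_nonneg : 0 ≤ P.C3 := (norm_nonneg (P.dttgrad 0 0)).trans (P.dttgrad_bound 0 0)

lemma norm_hessInv_apply_le (z : EuclideanSpace ℝ (Fin n)) (s : ℝ)
    (v : EuclideanSpace ℝ (Fin n)) : ‖P.hessInv z s v‖ ≤ ‖v‖ / P.m := by
  have h := mul_norm_le_norm_apply_of_coercive (P.strong_convex z s) (P.hessInv z s v)
  rwa [← ContinuousLinearMap.comp_apply, P.hessInv_right, ContinuousLinearMap.id_apply,
    mul_comm, ← le_div_iff₀ P.m_pos] at h

lemma norm_hessInv_apply_dtgrad_le (z : EuclideanSpace ℝ (Fin n)) (s : ℝ) :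
    ‖P.hessInv z s (P.dtgrad z s)‖ ≤ P.C0 / P.m :=
  (P.norm_hessInv_apply_le z s _).trans (by gcongr; exacts [P.m_pos.le, P.dtgrad_bound z s])

lemma norm_predictionField_le (z : EuclideanSpace ℝ (Fin n)) (s : ℝ) :
    ‖P.predictionField z s‖ ≤ P.C0 / P.m := by
  rw [predictionField, norm_neg]
  exact P.norm_hessInv_apply_dtgrad_le z s

lemma norm_hessInv_apply_sub_le (z w : EuclideanSpace ℝ (Fin n)) (s r : ℝ)
    (u v : EuclideanSpace ℝ (Fin n)) :
    ‖P.hessInv z s u - P.hessInv w r v‖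
      ≤ (‖u - v‖ + ‖P.hess z s - P.hess w r‖ * ‖P.hessInv w r v‖) / P.m := by
  rw [ContinuousLinearMap.leftInverse_apply_sub_rightInverse_apply (P.hessInv_left z s)
    (P.hessInv_right w r), norm_sub_rev (P.hess z s)]
  refine (P.norm_hessInv_apply_le z s _).trans ?_
  gcongr
  · exact P.m_pos.le
  · exact (norm_add_le _ _).trans (by gcongr; exact ContinuousLinearMap.le_opNorm _ _)

lemma norm_hess_sub_le_space (s : ℝ) (y z : EuclideanSpace ℝ (Fin n)) :
    ‖P.hess z s - P.hess y s‖ ≤ P.C1 * ‖z - y‖ :=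
  norm_sub_le_of_hasFDerivAt_of_norm_le (fun w => P.d3_spec w s) (fun w => P.d3_bound w s) y z

lemma norm_hess_sub_le_time (z : EuclideanSpace ℝ (Fin n)) (a b : ℝ) :
    ‖P.hess z b - P.hess z a‖ ≤ P.C2 * ‖b - a‖ :=
  norm_sub_le_of_hasDerivAt_of_norm_le (P.dthess_spec z) (P.dthess_bound z) a b

lemma norm_dtgrad_sub_le_space (s : ℝ) (y z : EuclideanSpace ℝ (Fin n)) :
    ‖P.dtgrad z s - P.dtgrad y s‖ ≤ P.C2 * ‖z - y‖ :=
  norm_timeDeriv_sub_le_of_spaceDeriv_lipschitz P.hess_spec P.dtgrad_spec P.C2_nonneg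
    P.norm_hess_sub_le_time y z s

lemma norm_dtgrad_sub_le_time (z : EuclideanSpace ℝ (Fin n)) (a b : ℝ) :
    ‖P.dtgrad z b - P.dtgrad z a‖ ≤ P.C3 * ‖b - a‖ :=
  norm_sub_le_of_hasDerivAt_of_norm_le (P.dttgrad_spec z) (P.dttgrad_bound z) a b

lemma norm_predictionField_comp_sub_le {γ : ℝ → EuclideanSpace ℝ (Fin n)} {V : ℝ} (hV : 0 ≤ V)
    (hγ : ∀ a b, ‖γ b - γ a‖ ≤ V * ‖b - a‖) (a b : ℝ) :
    ‖P.predictionField (γ b) b - P.predictionField (γ a) a‖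
      ≤ (P.C3 + P.C2 * V + (P.C2 + P.C1 * V) * (P.C0 / P.m)) / P.m * ‖b - a‖ := by
  have hH := norm_comp_sub_le_of_lipschitz P.C1_nonneg P.norm_hess_sub_le_space
    P.norm_hess_sub_le_time hγ a b
  have hb := norm_comp_sub_le_of_lipschitz P.C2_nonneg P.norm_dtgrad_sub_le_space
    P.norm_dtgrad_sub_le_time hγ a b
  have := P.C1_nonneg
  have := P.C2_nonneg
  calc ‖P.predictionField (γ b) b - P.predictionField (γ a) a‖
      = ‖P.hessInv (γ b) b (P.dtgrad (γ b) b) - P.hessInv (γ a) a (P.dtgrad (γ a) a)‖ := by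
        rw [predictionField, predictionField, neg_sub_neg, norm_sub_rev]
    _ ≤ (‖P.dtgrad (γ b) b - P.dtgrad (γ a) a‖ + ‖P.hess (γ b) b - P.hess (γ a) a‖
          * ‖P.hessInv (γ a) a (P.dtgrad (γ a) a)‖) / P.m := P.norm_hessInv_apply_sub_le ..
    _ ≤ ((P.C3 + P.C2 * V) * ‖b - a‖ + (P.C2 + P.C1 * V) * ‖b - a‖ * (P.C0 / P.m)) / P.m := by
        have := P.m_pos
        have := P.norm_hessInv_apply_dtgrad_le (γ a) a
        gcongr
    _ = (P.C3 + P.C2 * V + (P.C2 + P.C1 * V) * (P.C0 / P.m)) / P.m * ‖b - a‖ := by ring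

end TVOpt

/-- Along any trajectory of the continuous dynamics
`ẋ(t) = F(x(t),t)` with `F(x,t) = −[∇ₓₓ f(x;t)]⁻¹ ∇_tx f(x;t)`, the total time
derivative of `F` is bounded by `C₀²C₁/m³ + 2C₀C₂/m² + C₃/m`. -/
theorem prediction_direction_derivative_bound (n : ℕ) (P : TVOpt n)
    (x : ℝ → EuclideanSpace ℝ (Fin n))
    (hode : ∀ t : ℝ, HasDerivAt x (-(P.hessInv (x t) t (P.dtgrad (x t) t))) t) :
    ∀ (t : ℝ) (F' : EuclideanSpace ℝ (Fin n)),
      HasDerivAt (fun s => -(P.hessInv (x s) s (P.dtgrad (x s) s))) F' t →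
      ‖F'‖ ≤ P.C0 ^ 2 * P.C1 / P.m ^ 3 + 2 * P.C0 * P.C2 / P.m ^ 2 + P.C3 / P.m := by
  intro t F' hF'
  have hspeed : ∀ a b, ‖x b - x a‖ ≤ P.C0 / P.m * ‖b - a‖ :=
    norm_sub_le_of_hasDerivAt_of_norm_le hode (fun s => P.norm_predictionField_le (x s) s)
  have hm := P.m_pos
  have := P.C0_nonneg
  have := P.C1_nonneg
  have := P.C2_nonneg
  have := P.C3_nonneg
  refine hF'.le_of_lip' (by positivity) (Eventually.of_forall fun s => ?_)
  calc _ ≤ _ := P.norm_predictionField_comp_sub_le (by positivity) hspeed t s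
    _ = _ := by field_simp; ring
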